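/- Let U ⊆ ℝ² be open, let n : U → ℝ³ be C¹ with |n| > 0 on U, and let V : U → ℝ be C¹. Then at every point of U one has the identity |n| G[n/|n|] = ∇(1/|n|)·(½ ∇(|n|²) + |n|² ∇V) + (1/|n|)(½ ∇(|n|²)·∇V + G[n]). (In particular the right-hand side does not depend on V.) -/

import Mathlib

open Real Set

/-- Spatial partial derivative `∂_k` on `ℝ²` of a scalar field, with the
convention `∂₃ = 0` (the index `k = 2`, i.e. the third one, gives `0`). -/
noncomputable def pd (k : Fin 3) (f : (Fin 2 → ℝ) → ℝ) (x : Fin 2 → ℝ) : ℝ :=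
  fderiv ℝ f x (fun s : Fin 2 => if (s : ℕ) = (k : ℕ) then 1 else 0)

/-- `curl v = (∂₂v₃, −∂₁v₃, ∂₁v₂ − ∂₂v₁)` of a 3-component field on `ℝ²`. -/
noncomputable def curl3 (v : (Fin 2 → ℝ) → Fin 3 → ℝ) (x : Fin 2 → ℝ) : Fin 3 → ℝ :=
  ![pd 1 (fun y => v y 2) x, -(pd 0 (fun y => v y 2) x),
    pd 0 (fun y => v y 1) x - pd 1 (fun y => v y 0) x]

/-- `G[v] = ‖∇v‖² + 2 v·curl v + 2|v|²`. -/
noncomputable def Gfun (v : (Fin 2 → ℝ) → Fin 3 → ℝ) (x : Fin 2 → ℝ) : ℝ :=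
  (∑ s : Fin 2, ∑ j : Fin 3, (pd s.castSucc (fun y => v y j) x) ^ 2)
    + 2 * ∑ j : Fin 3, v x j * curl3 v x j
    + 2 * ∑ j : Fin 3, (v x j) ^ 2

/-- The gradient `∇f = (∂₁f, ∂₂f)` of a scalar field on `ℝ²`. -/
noncomputable def grad (f : (Fin 2 → ℝ) → ℝ) (x : Fin 2 → ℝ) : Fin 2 → ℝ :=
  fun s => pd s.castSucc f x

/-- Euclidean dot product on `ℝ²`. -/
def dot2 (a b : Fin 2 → ℝ) : ℝ := ∑ s : Fin 2, a s * b s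

/-! Write `Q = |n|²`, `r = √Q` and `w = 1/r`, so that `n/|n| = w n`. Expanding `G` of a
product field gives `G[w n] = w² G[n] + w ∇w·∇Q + Q |∇w|²`; the cross terms of the curl
vanish because `n · (∇w × n) = 0`. Since `∇w = -(w³/2) ∇Q` and `Q w² = r w = 1`, multiplying
by `r` leaves `G[n]/r + ½ ∇w·∇Q`, and the terms in `∇V` on the right-hand side cancel. -/

lemma pd_mul {f g : (Fin 2 → ℝ) → ℝ} {x : Fin 2 → ℝ} (hf : DifferentiableAt ℝ f x)
    (hg : DifferentiableAt ℝ g x) (k : Fin 3) :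
    pd k (fun y => f y * g y) x = f x * pd k g x + g x * pd k f x := by
  rw [pd, pd, pd, fderiv_fun_mul hf hg]
  rfl

lemma pd_comp_of_hasDerivAt {φ : ℝ → ℝ} {φ' : ℝ} {f : (Fin 2 → ℝ) → ℝ} {x : Fin 2 → ℝ}
    (hφ : HasDerivAt φ φ' (f x)) (hf : DifferentiableAt ℝ f x) (k : Fin 3) :
    pd k (fun y => φ (f y)) x = φ' * pd k f x := by
  have h : HasFDerivAt (fun y => φ (f y)) (φ' • fderiv ℝ f x) x :=
    hφ.comp_hasFDerivAt x hf.hasFDerivAt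
  rw [pd, pd, h.fderiv]
  rfl

lemma pd_sum {ι : Type*} (s : Finset ι) {f : ι → (Fin 2 → ℝ) → ℝ} {x : Fin 2 → ℝ}
    (hf : ∀ i ∈ s, DifferentiableAt ℝ (f i) x) (k : Fin 3) :
    pd k (fun y => ∑ i ∈ s, f i y) x = ∑ i ∈ s, pd k (f i) x := by
  rw [pd, fderiv_fun_sum hf, sum_apply]
  rfl

lemma pd_sum_sq {ι : Type*} [Fintype ι] {f : ι → (Fin 2 → ℝ) → ℝ} {x : Fin 2 → ℝ}
    (hf : ∀ i, DifferentiableAt ℝ (f i) x) (k : Fin 3) :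
    pd k (fun y => ∑ i, f i y ^ 2) x = ∑ i, 2 * f i x * pd k (f i) x := by
  rw [pd_sum (f := fun i y => f i y ^ 2) _ fun i _ => (hf i).pow 2]
  refine Finset.sum_congr rfl fun i _ => ?_
  rw [pd_comp_of_hasDerivAt (hasDerivAt_pow 2 (f i x)) (hf i)]
  ring

lemma pd_inv_sqrt {f : (Fin 2 → ℝ) → ℝ} {x : Fin 2 → ℝ} (hf : DifferentiableAt ℝ f x)
    (hpos : 0 < f x) (k : Fin 3) :
    pd k (fun y => 1 / √(f y)) x = -(1 / √(f x)) ^ 3 / 2 * pd k f x := by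
  have hsqrt : 0 < √(f x) := Real.sqrt_pos.mpr hpos
  have hφ : HasDerivAt (fun t => 1 / √t) (-(1 / √(f x)) ^ 3 / 2) (f x) := by
    simp only [one_div]
    refine ((Real.hasDerivAt_sqrt hpos.ne').inv hsqrt.ne').congr_deriv ?_
    field_simp
  exact pd_comp_of_hasDerivAt hφ hf k

lemma Gfun_mul_left {w : (Fin 2 → ℝ) → ℝ} {v : (Fin 2 → ℝ) → Fin 3 → ℝ} {x : Fin 2 → ℝ}
    (hw : DifferentiableAt ℝ w x) (hv : ∀ j, DifferentiableAt ℝ (fun y => v y j) x) :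
    Gfun (fun y j => w y * v y j) x
      = w x ^ 2 * Gfun v x + w x * dot2 (grad w x) (grad (fun y => ∑ j, v y j ^ 2) x)
        + (∑ j, v x j ^ 2) * dot2 (grad w x) (grad w x) := by
  have hpd (k j) := pd_mul hw (hv j) k
  have hsq (k) := pd_sum_sq hv k
  simp only [Gfun, curl3, grad, dot2, hpd, hsq]
  simp only [Fin.sum_univ_two, Fin.sum_univ_three,
    Fin.castSucc_zero, Fin.castSucc_one, Matrix.cons_val_zero, Matrix.cons_val_one,
    Matrix.cons_val_two, Matrix.head_cons, Matrix.tail_cons]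
  ring

theorem normn_G_unit_identity_general (U : Set (Fin 2 → ℝ)) (hU : IsOpen U)
    (n : (Fin 2 → ℝ) → Fin 3 → ℝ) (V : (Fin 2 → ℝ) → ℝ)
    (hn : ContDiffOn ℝ 1 n U)
    (hpos : ∀ x ∈ U, 0 < Real.sqrt (∑ j, (n x j) ^ 2)) :
    ∀ x ∈ U,
      Real.sqrt (∑ j, (n x j) ^ 2)
          * Gfun (fun y j => n y j / Real.sqrt (∑ i, (n y i) ^ 2)) x
        = dot2 (grad (fun y => 1 / Real.sqrt (∑ j, (n y j) ^ 2)) x)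
               (fun s => (1 / 2) * grad (fun y => ∑ j, (n y j) ^ 2) x s
                  + (∑ j, (n x j) ^ 2) * grad V x s)
          + (1 / Real.sqrt (∑ j, (n x j) ^ 2))
            * ((1 / 2) * dot2 (grad (fun y => ∑ j, (n y j) ^ 2) x) (grad V x)
               + Gfun n x) := by
  intro x hx
  have hdiff : ∀ j, DifferentiableAt ℝ (fun y => n y j) x := differentiableAt_pi.mp
    ((hn.contDiffAt (hU.mem_nhds hx)).differentiableAt one_ne_zero)
  have hQ : 0 < ∑ j, n x j ^ 2 := Real.sqrt_pos.mp (hpos x hx)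
  have hQd : DifferentiableAt ℝ (fun y => ∑ j, n y j ^ 2) x := by fun_prop
  have hunit : (fun y j => n y j / √(∑ i, n y i ^ 2))
      = fun y j => 1 / √(∑ i, n y i ^ 2) * n y j := by
    funext y j
    ring
  have hgrad : grad (fun y => 1 / √(∑ j, n y j ^ 2)) x
      = fun s => -(1 / √(∑ j, n x j ^ 2)) ^ 3 / 2 * grad (fun y => ∑ j, n y j ^ 2) x s :=
    funext fun s => pd_inv_sqrt hQd hQ s.castSucc
  rw [hunit, Gfun_mul_left (by fun_prop (disch := positivity)) hdiff, hgrad]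
  have hsq := Real.sq_sqrt hQ.le
  set r := √(∑ j, n x j ^ 2)
  simp only [dot2, Fin.sum_univ_two]
  rw [← hsq]
  field_simp
  ring

/-- For `U ⊆ ℝ²` open, `n : U → ℝ³` of class `C¹` with `|n| > 0` on `U`, and
`V : U → ℝ` of class `C¹`, at every point of `U`:
`|n| G[n/|n|] = ∇(1/|n|)·(½∇(|n|²) + |n|²∇V) + (1/|n|)(½∇(|n|²)·∇V + G[n])`. -/
theorem normn_G_unit_identity (U : Set (Fin 2 → ℝ)) (hU : IsOpen U)
    (n : (Fin 2 → ℝ) → Fin 3 → ℝ) (V : (Fin 2 → ℝ) → ℝ)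
    (hn : ContDiffOn ℝ 1 n U) (hV : ContDiffOn ℝ 1 V U)
    (hpos : ∀ x ∈ U, 0 < Real.sqrt (∑ j, (n x j) ^ 2)) :
    ∀ x ∈ U,
      Real.sqrt (∑ j, (n x j) ^ 2)
          * Gfun (fun y j => n y j / Real.sqrt (∑ i, (n y i) ^ 2)) x
        = dot2 (grad (fun y => 1 / Real.sqrt (∑ j, (n y j) ^ 2)) x)
               (fun s => (1 / 2) * grad (fun y => ∑ j, (n y j) ^ 2) x s
                  + (∑ j, (n x j) ^ 2) * grad V x s)
          + (1 / Real.sqrt (∑ j, (n x j) ^ 2))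
            * ((1 / 2) * dot2 (grad (fun y => ∑ j, (n y j) ^ 2) x) (grad V x)
               + Gfun n x) :=
  normn_G_unit_identity_general U hU n V hn hpos
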